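/- arXiv:2001.02580 — 2 statements merged into one kernel-verified Lean document; each statement's English description precedes it below -/
import Mathlib

section
/- Let $k$ be a field and $A$ a finite-dimensional commutative local $k$-algebra with residue field $k$. Then the $A$-module $\mathrm{Hom}_k(A,k)$ is an injective hull of the residue field $k$ over $A$. -/
open IsLocalRing

noncomputable section

universe u v w

/-- `I` is an injective hull of `M` over `R`: `I` is injective and contains (a copy of) `M` as
an essential submodule. -/
def IsInjectiveHull (R : Type u) (M : Type v) (I : Type w) [Ring R] [AddCommGroup M]
    [Module R M] [AddCommGroup I] [Module R I] : Prop :=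
  Module.Injective R I ∧ ∃ f : M →ₗ[R] I, Function.Injective f ∧
    ∀ N : Submodule R I, N ≠ ⊥ → N ⊓ LinearMap.range f ≠ ⊥

variable (k : Type u) [Field k] (A : Type v) [CommRing A] [Algebra k A]

/-- The `A`-module structure on `Hom_k(A, k)` given by `(a • f) b = f (a * b)`. -/
noncomputable instance dualModule : Module A (A →ₗ[k] k) where
  smul a f := f.comp (LinearMap.mulLeft k a)
  one_smul f := by
    show f.comp (LinearMap.mulLeft k 1) = f
    ext x; simp
  mul_smul a b f := by
    show f.comp (LinearMap.mulLeft k (a * b)) =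
      (f.comp (LinearMap.mulLeft k b)).comp (LinearMap.mulLeft k a)
    ext x
    simp only [LinearMap.comp_apply, LinearMap.mulLeft_apply]
    congr 1; ring
  smul_zero a := by
    show (0 : A →ₗ[k] k).comp (LinearMap.mulLeft k a) = 0
    ext x; simp
  smul_add a f g := by
    show (f + g).comp (LinearMap.mulLeft k a) =
      f.comp (LinearMap.mulLeft k a) + g.comp (LinearMap.mulLeft k a)
    ext x; simp
  add_smul a b f := by
    show f.comp (LinearMap.mulLeft k (a + b)) =
      f.comp (LinearMap.mulLeft k a) + f.comp (LinearMap.mulLeft k b)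
    ext x
    simp only [LinearMap.comp_apply, LinearMap.mulLeft_apply, LinearMap.add_apply, ← map_add]
    congr 1; ring
  zero_smul f := by
    show f.comp (LinearMap.mulLeft k 0) = 0
    ext x; simp

lemma dual_smul_apply (a : A) (f : A →ₗ[k] k) (b : A) : (a • f) b = f (a * b) := rfl

instance resTower [IsLocalRing A] : IsScalarTower k A (ResidueField A) :=
  IsScalarTower.of_algebraMap_eq fun _ => rfl

theorem dual_injective : Module.Injective A (A →ₗ[k] k) := by
  apply Module.Baer.injective
  intro I g
  -- extend the functional x ↦ g x 1 from I to A
  let φ : (I.restrictScalars k) →ₗ[k] k :=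
    { toFun := fun x => g ⟨x.1, x.2⟩ 1
      map_add' := by
        intro x y
        show g (⟨x.1, x.2⟩ + ⟨y.1, y.2⟩) 1 = g ⟨x.1, x.2⟩ 1 + g ⟨y.1, y.2⟩ 1
        rw [map_add]; rfl
      map_smul' := by
        intro c x
        have h : (⟨(c • x).1, (c • x).2⟩ : I) = (algebraMap k A c) • ⟨x.1, x.2⟩ :=
          Subtype.ext (Algebra.smul_def c x.1)
        show g ⟨(c • x).1, (c • x).2⟩ 1 = (RingHom.id k) c • g ⟨x.1, x.2⟩ 1
        rw [h, map_smul, dual_smul_apply, mul_one, Algebra.algebraMap_eq_smul_one, map_smul]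
        rfl }
  obtain ⟨ψ, hψ⟩ := LinearMap.exists_extend φ
  refine ⟨LinearMap.toSpanSingleton A _ ψ, fun x mem => ?_⟩
  ext b
  have hxb : x * b ∈ I := I.mul_mem_right b mem
  have h1 : ψ (x * b) = g ⟨x * b, hxb⟩ 1 :=
    congrFun (congrArg (fun h => h.toFun) hψ) ⟨x * b, hxb⟩
  have h2 : (⟨x * b, hxb⟩ : I) = b • ⟨x, mem⟩ := by ext; simp [mul_comm]
  show ψ (x * b) = g ⟨x, mem⟩ b
  rw [h1, h2, map_smul, dual_smul_apply, mul_one]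

/-- If `A` is a finite-dimensional commutative local `k`-algebra with residue field `k`, then
`Hom_k(A, k)` is an injective hull of the residue field over `A`. -/
theorem dual_isInjectiveHull [FiniteDimensional k A] [IsLocalRing A]
    (hres : Function.Bijective (algebraMap k (ResidueField A))) :
    IsInjectiveHull A (ResidueField A) (A →ₗ[k] k) := by
  classical
  refine ⟨dual_injective k A, ?_⟩
  set E := RingEquiv.ofBijective (algebraMap k (ResidueField A)) hres with hE
  have hEalg : ∀ c : k, E.symm (residue A (algebraMap k A c)) = c := by
    intro c
    rw [← IsLocalRing.ResidueField.algebraMap_eq,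
      ← IsScalarTower.algebraMap_apply k A (ResidueField A)]
    exact E.symm_apply_apply c
  -- lam : A →ₗ[k] k, the functional with kernel m
  let lam : A →ₗ[k] k :=
    { toFun := fun a => E.symm (residue A a)
      map_add' := by intro a b; simp
      map_smul' := by
        intro c a
        simp only [RingHom.id_apply, smul_eq_mul]
        rw [Algebra.smul_def, map_mul, map_mul, hEalg] }
  have lam_apply : ∀ a, lam a = E.symm (residue A a) := fun _ => rfl
  have lam_one : lam 1 = 1 := by rw [lam_apply, map_one, map_one]
  -- the embedding f
  let f : ResidueField A →ₗ[A] (A →ₗ[k] k) :=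
    { toFun := fun r => E.symm r • lam
      map_add' := by
        intro r s
        show E.symm (r + s) • lam = E.symm r • lam + E.symm s • lam
        rw [map_add, add_smul]
      map_smul' := by
        intro a r
        show E.symm (a • r) • lam = a • (E.symm r • lam)
        have h1 : a • r = residue A a * r := by
          rw [← IsLocalRing.ResidueField.algebraMap_eq, ← Algebra.smul_def]
        rw [h1, map_mul]
        ext b
        rw [dual_smul_apply]
        show E.symm (residue A a) * E.symm r * lam b = E.symm r * lam (a * b)
        rw [lam_apply, lam_apply, map_mul, map_mul]
        ring }
  have f_apply : ∀ r, f r = E.symm r • lam := fun _ => rfl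
  have hfinj : Function.Injective f := by
    intro r s h
    have := congrArg (fun g : A →ₗ[k] k => g 1) h
    simp only [f_apply, LinearMap.smul_apply, lam_one, smul_eq_mul, mul_one] at this
    exact E.symm.injective this
  refine ⟨f, hfinj, ?_⟩
  intro N hN
  -- m is nilpotent
  have hart : IsArtinianRing A := isArtinian_of_tower k inferInstance
  obtain ⟨n, hn⟩ : IsNilpotent (maximalIdeal A) := by
    rw [← IsLocalRing.jacobson_eq_maximalIdeal (⊥ : Ideal A) bot_ne_top]
    exact IsArtinianRing.isNilpotent_jacobson_bot
  obtain ⟨φ, hφN, hφ0⟩ := Submodule.exists_mem_ne_zero_of_ne_bot hN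
  -- find ψ ∈ N killed by m
  have hex : ∃ j, ∀ a ∈ (maximalIdeal A) ^ j, a • φ = 0 := by
    refine ⟨n, fun a ha => ?_⟩
    rw [hn, Ideal.zero_eq_bot, Submodule.mem_bot] at ha
    rw [ha, zero_smul]
  have hjspec := Nat.find_spec hex
  have hj0 : Nat.find hex ≠ 0 := by
    intro h
    have := hjspec 1 (by rw [h, pow_zero, Ideal.one_eq_top]; trivial)
    rw [one_smul] at this
    exact hφ0 this
  have hmin := Nat.find_min hex (m := Nat.find hex - 1) (by omega)
  push_neg at hmin
  obtain ⟨a, ha, haφ⟩ := hmin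
  have hψN : a • φ ∈ N := N.smul_mem a hφN
  have hψm : ∀ b ∈ maximalIdeal A, b • (a • φ) = 0 := by
    intro b hb
    rw [← mul_smul]
    refine hjspec (b * a) ?_
    have : (maximalIdeal A) * (maximalIdeal A) ^ (Nat.find hex - 1)
        ≤ (maximalIdeal A) ^ (Nat.find hex) := by
      rw [← pow_succ']
      exact Ideal.pow_le_pow_right (by omega)
    exact this (Ideal.mul_mem_mul hb ha)
  set ψ := a • φ with hψdef
  -- ψ vanishes on m
  have hψvan : ∀ b ∈ maximalIdeal A, ψ b = 0 := by
    intro b hb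
    have := congrArg (fun g : A →ₗ[k] k => g 1) (hψm b hb)
    simpa [dual_smul_apply] using this
  -- ψ = ψ 1 • lam
  have hψeq : ψ = ψ 1 • lam := by
    ext b
    have hbdec : b - algebraMap k A (E.symm (residue A b)) ∈ maximalIdeal A := by
      have h0 : residue A (b - algebraMap k A (E.symm (residue A b))) = 0 := by
        rw [map_sub, ← IsLocalRing.ResidueField.algebraMap_eq,
          ← IsScalarTower.algebraMap_apply k A (ResidueField A)]
        rw [show (algebraMap k (ResidueField A)) (E.symm ((algebraMap A (ResidueField A)) b))
            = E (E.symm ((algebraMap A (ResidueField A)) b)) from rfl, E.apply_symm_apply]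
        rw [IsLocalRing.ResidueField.algebraMap_eq, sub_self]
      exact Ideal.Quotient.eq_zero_iff_mem.mp h0
    have h1 : ψ b - ψ (algebraMap k A (E.symm (residue A b))) = 0 := by
      rw [← map_sub]; exact hψvan _ hbdec
    have h2 : ψ (algebraMap k A (E.symm (residue A b)))
        = E.symm (residue A b) * ψ 1 := by
      rw [Algebra.algebraMap_eq_smul_one, map_smul, smul_eq_mul]
    show ψ b = ψ 1 * lam b
    rw [lam_apply]
    have := sub_eq_zero.mp h1
    rw [this, h2]; ring
  -- conclude
  intro hbot
  apply haφ
  have hψmem : ψ ∈ N ⊓ LinearMap.range f := by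
    refine ⟨hψN, ⟨algebraMap k (ResidueField A) (ψ 1), ?_⟩⟩
    rw [f_apply]
    rw [show E.symm (algebraMap k (ResidueField A) (ψ 1)) = ψ 1 from E.symm_apply_apply _]
    exact hψeq.symm
  rw [hbot, Submodule.mem_bot] at hψmem
  exact hψmem
end
end

section
/- Let $k$ be a field and $A$ a finite-dimensional graded-commutative connected Hopf algebra over $k$ (for instance the cohomology of a connected $H$-space with finite cohomology, with $k$ perfect). Then $A$ is a Poincaré duality algebra: if $n$ is the top nonzero degree, $A^n$ is one-dimensional and the multiplication pairing $A^i \times A^{n-i} \to A^n$ is perfect for all $i$. -/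
/-!
Let `φ` be a functional on `B` supported in the top degree `n`. Connectedness makes `φ` a left
integral on `B`, i.e. `∑ φ(z₍₁₎) z₍₂₎ = φ(z) 1`, and makes every `y ∈ 𝒜 n` a left integral in `B`,
i.e. `a y = ε(a) y`. If `φ(x B) = 0`, the map `T = ∑ φ(x₍₁₎ ·) x₍₂₎` satisfies `T ⋆ id = 0` in
the convolution algebra, so `T = 0` since `id` has the antipode as convolution inverse; but
`T y = φ(y) x`, so `x = 0` as soon as `φ(y) ≠ 0`. Nondegeneracy of `(x, a) ↦ φ(x a)` embeds `𝒜 n`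
into `k` through `φ` and pairs `𝒜 i` perfectly with `𝒜 (n - i)`.
-/

namespace HopfAlgebra

open Coalgebra TensorProduct WithConv

variable {R H : Type*} [CommRing R] [Ring H]

section Algebra

variable [Algebra R H]

def contractFst (φ : H →ₗ[R] R) : H ⊗[R] H →ₗ[R] H :=
  (TensorProduct.lid R H).toLinearMap ∘ₗ φ.rTensor H

@[simp] lemma contractFst_tmul (φ : H →ₗ[R] R) (a b : H) :
    contractFst φ (a ⊗ₜ b) = φ a • b := by
  simp [contractFst]

lemma contractFst_mul_one_tmul (φ : H →ₗ[R] R) (t : H ⊗[R] H) (z : H) :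
    contractFst φ (t * (1 ⊗ₜ z)) = contractFst φ t * z := by
  induction t using TensorProduct.induction_on with
  | zero => simp
  | tmul a b => simp [Algebra.TensorProduct.tmul_mul_tmul]
  | add t t' ht ht' => simp [add_mul, ht, ht']

end Algebra

variable [HopfAlgebra R H]

lemma eq_zero_of_convMul_id_eq_zero {f : H →ₗ[R] H} (hf : toConv f * toConv LinearMap.id = 0) :
    f = 0 := by
  apply toConv_injective
  calc toConv f = toConv f * toConv LinearMap.id * toConv (antipode R) := by
        rw [mul_assoc, LinearMap.id_mul_antipode, mul_one]
    _ = 0 := by rw [hf, zero_mul]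

/-- `leftCap φ x y = ∑ φ (x₍₁₎ * y) • x₍₂₎` in Sweedler notation. -/
def leftCap (φ : H →ₗ[R] R) (x : H) : H →ₗ[R] H :=
  contractFst φ ∘ₗ LinearMap.mulLeft R (comul x) ∘ₗ (TensorProduct.mk R H H).flip 1

lemma leftCap_apply (φ : H →ₗ[R] R) (x y : H) :
    leftCap φ x y = contractFst φ (comul x * (y ⊗ₜ 1)) := rfl

lemma mul'_map_leftCap_id (φ : H →ₗ[R] R) (x : H) (u : H ⊗[R] H) :
    LinearMap.mul' R H (map (leftCap φ x) LinearMap.id u) = contractFst φ (comul x * u) := by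
  induction u using TensorProduct.induction_on with
  | zero => simp
  | tmul y z =>
    rw [TensorProduct.map_tmul, LinearMap.mul'_apply, LinearMap.id_apply, leftCap_apply,
      ← contractFst_mul_one_tmul, mul_assoc, Algebra.TensorProduct.tmul_mul_tmul, one_mul, mul_one]
  | add u u' hu hu' => simp only [map_add, mul_add, hu, hu']

lemma leftCap_convMul_id {φ : H →ₗ[R] R} (hφ : ∀ z, contractFst φ (comul z) = φ z • (1 : H))
    (x : H) : toConv (leftCap φ x) * toConv LinearMap.id =
      toConv ((φ ∘ₗ LinearMap.mulLeft R x).smulRight 1) := by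
  ext y
  rw [LinearMap.convMul_apply, ofConv_toConv, ofConv_toConv, mul'_map_leftCap_id,
    ← Bialgebra.comul_mul, hφ]
  rfl

lemma leftCap_apply_of_forall_mul_eq_counit_smul (φ : H →ₗ[R] R) (x : H) {y : H}
    (hy : ∀ a, a * y = counit (R := R) a • y) : leftCap φ x y = φ y • x := by
  have hcap : contractFst φ ∘ₗ LinearMap.mulRight R (y ⊗ₜ 1) =
      φ y • contractFst (counit (R := R) (A := H)) := by
    ext a b
    simp [Algebra.TensorProduct.tmul_mul_tmul, hy, smul_smul, mul_comm]
  have hcapx := congr($hcap (comul x))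
  rw [leftCap_apply]
  simpa [contractFst, rTensor_counit_comul] using hcapx

theorem smul_eq_zero_of_forall_apply_mul_eq_zero {φ : H →ₗ[R] R}
    (hφ : ∀ z, contractFst φ (comul z) = φ z • (1 : H)) {y : H}
    (hy : ∀ a, a * y = counit (R := R) a • y) {x : H} (hx : ∀ a, φ (x * a) = 0) : φ y • x = 0 := by
  have hxφ : φ ∘ₗ LinearMap.mulLeft R x = 0 := LinearMap.ext hx
  have hcap : leftCap φ x = 0 :=
    eq_zero_of_convMul_id_eq_zero <| by simp [leftCap_convMul_id hφ, hxφ]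
  rw [← leftCap_apply_of_forall_mul_eq_counit_smul φ x hy, hcap, LinearMap.zero_apply]

end HopfAlgebra

namespace GradedHopfAlgebra

open Coalgebra TensorProduct HopfAlgebra

variable {R B : Type*} [CommRing R] [Ring B]

def IsGradedComul [Bialgebra R B] (𝒜 : ℕ → Submodule R B) : Prop :=
  ∀ m : ℕ, (𝒜 m).map (comul (R := R) (A := B)) ≤
    ⨆ (q : ℕ × ℕ) (_ : q.1 + q.2 = m),
      LinearMap.range (TensorProduct.map (𝒜 q.1).subtype (𝒜 q.2).subtype)

section Bialgebra

variable [Bialgebra R B] {𝒜 : ℕ → Submodule R B}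

lemma comul_mem_of_forall_tmul_mem (hΔ : IsGradedComul 𝒜) {m : ℕ} {x : B} (hx : x ∈ 𝒜 m)
    {S : Submodule R (B ⊗[R] B)}
    (hS : ∀ p q, p + q = m → ∀ a ∈ 𝒜 p, ∀ b ∈ 𝒜 q, a ⊗ₜ b ∈ S) : comul x ∈ S := by
  refine (iSup₂_le fun q hq => ?_ : _ ≤ S) (hΔ m (Submodule.mem_map_of_mem hx))
  rw [range_map_eq_span_tmul, Submodule.span_le]
  rintro _ ⟨a, b, rfl⟩
  exact hS q.1 q.2 hq a a.2 b b.2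

lemma algebraMap_counit_of_mem_zero (hconn : 𝒜 0 = 1) {a : B} (ha : a ∈ 𝒜 0) :
    algebraMap R B (counit a) = a := by
  obtain ⟨c, rfl⟩ := Submodule.mem_one.mp (hconn ▸ ha)
  rw [Bialgebra.counit_algebraMap]

variable [GradedAlgebra 𝒜] {n : ℕ}

lemma counit_eq_zero_of_mem [IsReduced R] (habove : ∀ m, n < m → 𝒜 m = ⊥) {p : ℕ} (hp : 0 < p)
    {a : B} (ha : a ∈ 𝒜 p) : counit (R := R) a = 0 := by
  have hpow : a ^ (n + 1) = 0 := by
    have := SetLike.pow_mem_graded (n + 1) ha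
    rwa [habove _ (by rw [smul_eq_mul]; nlinarith), Submodule.mem_bot] at this
  exact (IsNilpotent.map ⟨n + 1, hpow⟩ (Bialgebra.counitAlgHom R B)).eq_zero

lemma mul_top_and_top_mul_eq_counit_smul_of_mem [IsReduced R] (hconn : 𝒜 0 = 1)
    (habove : ∀ m, n < m → 𝒜 m = ⊥) {y : B} (hy : y ∈ 𝒜 n) {p : ℕ} {a : B} (ha : a ∈ 𝒜 p) :
    a * y = counit (R := R) a • y ∧ y * a = counit (R := R) a • y := by
  rcases Nat.eq_zero_or_pos p with rfl | hp
  · obtain ⟨c, rfl⟩ := Submodule.mem_one.mp (hconn ▸ ha)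
    simp [Algebra.smul_def, Algebra.commutes]
  · have hay : a * y ∈ 𝒜 (p + n) := SetLike.mul_mem_graded ha hy
    have hya : y * a ∈ 𝒜 (n + p) := SetLike.mul_mem_graded hy ha
    rw [habove _ (by omega), Submodule.mem_bot] at hay hya
    simp [hay, hya, counit_eq_zero_of_mem habove hp ha]

lemma mul_top_eq_counit_smul [IsReduced R] (hconn : 𝒜 0 = 1)
    (habove : ∀ m, n < m → 𝒜 m = ⊥) {y : B} (hy : y ∈ 𝒜 n) (a : B) :
    a * y = counit (R := R) a • y := by
  have : LinearMap.mulRight R y = (counit (R := R) (A := B)).smulRight y :=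
    DirectSum.decompose_lhom_ext 𝒜 fun _ => LinearMap.ext fun a =>
      (mul_top_and_top_mul_eq_counit_smul_of_mem hconn habove hy a.2).1
  exact congr($this a)

lemma top_mul_eq_counit_smul [IsReduced R] (hconn : 𝒜 0 = 1)
    (habove : ∀ m, n < m → 𝒜 m = ⊥) {y : B} (hy : y ∈ 𝒜 n) (a : B) :
    y * a = counit (R := R) a • y := by
  have : LinearMap.mulLeft R y = (counit (R := R) (A := B)).smulRight y :=
    DirectSum.decompose_lhom_ext 𝒜 fun _ => LinearMap.ext fun a =>
      (mul_top_and_top_mul_eq_counit_smul_of_mem hconn habove hy a.2).2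
  exact congr($this a)

lemma contractFst_comul_eq_smul_one (hconn : 𝒜 0 = 1) (hΔ : IsGradedComul 𝒜)
    (habove : ∀ m, n < m → 𝒜 m = ⊥) {φ : B →ₗ[R] R} (hφ : ∀ j ≠ n, ∀ z ∈ 𝒜 j, φ z = 0)
    (z : B) : contractFst φ (comul z) = φ z • (1 : B) := by
  suffices contractFst φ ∘ₗ comul = φ.smulRight 1 from congr($this z)
  refine DirectSum.decompose_lhom_ext 𝒜 fun m => LinearMap.ext fun ⟨z, hz⟩ => ?_
  simp only [LinearMap.comp_apply, Submodule.subtype_apply, LinearMap.smulRight_apply]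
  rcases le_or_gt m n with hm | hm
  · have key : comul z ∈ LinearMap.eqLocus (contractFst φ)
        (φ.smulRight 1 ∘ₗ (TensorProduct.rid R B).toLinearMap ∘ₗ counit.lTensor B) := by
      refine comul_mem_of_forall_tmul_mem hΔ hz fun p q hpq a ha b hb => ?_
      by_cases hp : p = n
      · subst hp
        obtain rfl : q = 0 := by omega
        rw [LinearMap.mem_eqLocus, contractFst_tmul, ← algebraMap_counit_of_mem_zero hconn hb]
        simp [Algebra.algebraMap_eq_smul_one, smul_smul, mul_comm]
      · simp [hφ p hp a ha]
    rw [LinearMap.mem_eqLocus.mp key]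
    simp [lTensor_counit_comul]
  · rw [habove m hm, Submodule.mem_bot] at hz
    simp [hz]

end Bialgebra

section Field

variable {k : Type*} [Field k]

lemma exists_linearMap_apply_ne_zero_of_mem {ι M : Type*} [DecidableEq ι] [AddCommGroup M]
    [Module k M] (ℳ : ι → Submodule k M) [DirectSum.Decomposition ℳ] {i : ι} {y : M}
    (hy : y ∈ ℳ i) (hy0 : y ≠ 0) :
    ∃ φ : M →ₗ[k] k, φ y ≠ 0 ∧ ∀ j ≠ i, ∀ z ∈ ℳ j, φ z = 0 := by
  obtain ⟨ψ, hψ⟩ := Module.Projective.exists_dual_ne_zero k (x := (⟨y, hy⟩ : ℳ i))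
    (by simpa using hy0)
  refine ⟨ψ ∘ₗ DirectSum.component k ι (ℳ ·) i ∘ₗ (DirectSum.decomposeLinearEquiv ℳ).toLinearMap,
    ?_, fun j hj z hz => ?_⟩
  · simpa [DirectSum.decomposeLinearEquiv_apply_coe ℳ i ⟨y, hy⟩] using hψ
  · simp [DirectSum.decomposeLinearEquiv_apply_coe ℳ j ⟨z, hz⟩, DirectSum.component.of, hj]

variable {B : Type*} [Ring B] [HopfAlgebra k B] {𝒜 : ℕ → Submodule k B} [GradedAlgebra 𝒜]
  {n : ℕ}

theorem exists_top_functional_nondegenerate (hconn : 𝒜 0 = 1) (hΔ : IsGradedComul 𝒜)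
    (habove : ∀ m, n < m → 𝒜 m = ⊥) (htop : 𝒜 n ≠ ⊥) :
    ∃ φ : B →ₗ[k] k, (∀ j ≠ n, ∀ z ∈ 𝒜 j, φ z = 0) ∧
      ∀ x : B, (∀ a, φ (x * a) = 0) → x = 0 := by
  obtain ⟨y, hy, hy0⟩ := (Submodule.ne_bot_iff _).mp htop
  obtain ⟨φ, hφy, hφ⟩ := exists_linearMap_apply_ne_zero_of_mem 𝒜 hy hy0
  refine ⟨φ, hφ, fun x hx => ?_⟩
  have hφyx := smul_eq_zero_of_forall_apply_mul_eq_zero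
    (contractFst_comul_eq_smul_one hconn hΔ habove hφ) (mul_top_eq_counit_smul hconn habove hy) hx
  exact (smul_eq_zero.mp hφyx).resolve_left hφy

lemma finrank_top_eq_one (hconn : 𝒜 0 = 1) (habove : ∀ m, n < m → 𝒜 m = ⊥)
    (htop : 𝒜 n ≠ ⊥) {φ : B →ₗ[k] k} (hφ : ∀ x : B, (∀ a, φ (x * a) = 0) → x = 0) :
    Module.finrank k (𝒜 n) = 1 := by
  have hinj : Function.Injective (φ ∘ₗ (𝒜 n).subtype) := by
    rw [← LinearMap.ker_eq_bot, Submodule.eq_bot_iff]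
    rintro ⟨z, hz⟩ hφz
    ext
    refine hφ z fun a => ?_
    rw [top_mul_eq_counit_smul hconn habove hz, map_smul, smul_eq_zero]
    exact Or.inr hφz
  have := Module.Finite.of_injective _ hinj
  have hle := LinearMap.finrank_le_finrank_of_injective hinj
  have hne : Module.finrank k (𝒜 n) ≠ 0 := Submodule.finrank_eq_zero.not.mpr htop
  rw [Module.finrank_self] at hle
  omega

lemma exists_mem_mul_ne_zero (habove : ∀ m, n < m → 𝒜 m = ⊥)
    {φ : B →ₗ[k] k} (hφn : ∀ j ≠ n, ∀ z ∈ 𝒜 j, φ z = 0)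
    (hφ : ∀ x : B, (∀ a, φ (x * a) = 0) → x = 0) {i : ℕ} {x : B} (hx : x ∈ 𝒜 i) (hx0 : x ≠ 0) :
    ∃ y ∈ 𝒜 (n - i), x * y ≠ 0 := by
  have hi : i ≤ n := by
    by_contra! hi
    rw [habove i hi, Submodule.mem_bot] at hx
    exact hx0 hx
  by_contra! hxy
  refine hx0 (hφ x fun a => ?_)
  suffices φ ∘ₗ LinearMap.mulLeft k x = 0 from congr($this a)
  refine DirectSum.decompose_lhom_ext 𝒜 fun j => LinearMap.ext fun ⟨b, hb⟩ => ?_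
  by_cases hj : j = n - i
  · subst hj
    simp [hxy b hb]
  · exact hφn (i + j) (by omega) _ (SetLike.mul_mem_graded hx hb)

end Field

end GradedHopfAlgebra

theorem hopf_poincare_duality_general (k : Type u) [Field k] (B : Type v) [Ring B]
    [HopfAlgebra k B] (𝒜 : ℕ → Submodule k B) [GradedAlgebra 𝒜]
    -- connectedness: the degree-zero part is spanned by the unit
    (hconn : 𝒜 0 = 1)
    -- the comultiplication respects the grading
    (hΔ : ∀ m : ℕ, (𝒜 m).map (Coalgebra.comul (R := k) (A := B)) ≤
      ⨆ (q : ℕ × ℕ) (_ : q.1 + q.2 = m),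
        LinearMap.range (TensorProduct.map (𝒜 q.1).subtype (𝒜 q.2).subtype))
    (n : ℕ) (htop : 𝒜 n ≠ ⊥) (habove : ∀ m : ℕ, n < m → 𝒜 m = ⊥) :
    Module.finrank k (𝒜 n) = 1 ∧
      ∀ i : ℕ, ∀ x ∈ 𝒜 i, x ≠ 0 → ∃ y ∈ 𝒜 (n - i), x * y ≠ 0 := by
  obtain ⟨φ, hφn, hφ⟩ :=
    GradedHopfAlgebra.exists_top_functional_nondegenerate hconn hΔ habove htop
  exact ⟨GradedHopfAlgebra.finrank_top_eq_one hconn habove htop hφ,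
    fun i x hx hx0 => GradedHopfAlgebra.exists_mem_mul_ne_zero habove hφn hφ hx hx0⟩

/-- A finite-dimensional graded-commutative connected graded Hopf algebra over a field (for
instance the cohomology of a connected `H`-space with finite cohomology) is a Poincaré duality
algebra: the top nonzero degree part is one-dimensional and the multiplication pairing
`A^i × A^{n-i} → A^n` is perfect. -/
theorem hopf_poincare_duality (k : Type u) [Field k] (B : Type v) [Ring B]
    [HopfAlgebra k B] (𝒜 : ℕ → Submodule k B) [GradedAlgebra 𝒜] [FiniteDimensional k B]
    -- connectedness: the degree-zero part is spanned by the unit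
    (hconn : 𝒜 0 = 1)
    -- graded-commutativity
    (hcomm : ∀ (i j : ℕ), ∀ x ∈ 𝒜 i, ∀ y ∈ 𝒜 j, x * y = ((-1 : ℤ) ^ (i * j)) • (y * x))
    -- the comultiplication respects the grading
    (hΔ : ∀ m : ℕ, (𝒜 m).map (Coalgebra.comul (R := k) (A := B)) ≤
      ⨆ (q : ℕ × ℕ) (_ : q.1 + q.2 = m),
        LinearMap.range (TensorProduct.map (𝒜 q.1).subtype (𝒜 q.2).subtype))
    (n : ℕ) (htop : 𝒜 n ≠ ⊥) (habove : ∀ m : ℕ, n < m → 𝒜 m = ⊥) :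
    Module.finrank k (𝒜 n) = 1 ∧
      ∀ i : ℕ, ∀ x ∈ 𝒜 i, x ≠ 0 → ∃ y ∈ 𝒜 (n - i), x * y ≠ 0 :=
  hopf_poincare_duality_general k B 𝒜 hconn hΔ n htop habove
end
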